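/- Let $\rho^0, \rho^1, \ldots, \rho^M$ be elements of a real inner product space with $\rho^0 = 0$, satisfying for $1 \leq m \leq M$: $\frac{\rho^m - \rho^{m-1}}{\tau} + A^m = R^m$, where the terms $A^m$ satisfy $\sum_{m=1}^{m_0} (A^m, \rho^{m-1/2}) \geq 0$ for all $m_0$, with $\rho^{m-1/2} = (\rho^m + \rho^{m-1})/2$. Then $\|\rho^{m_0}\| \leq 2\tau \sum_{m=1}^{m_0} \|R^m\|$ for all $1 \leq m_0 \leq M$. -/
import Mathlib


open RealInnerProductSpace

lemma telescope_Icc (g : ℕ → ℝ) (k : ℕ) :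
    ∑ m ∈ Finset.Icc 1 k, (g m - g (m - 1)) = g k - g 0 := by
  induction k with
  | zero => simp
  | succ n ih =>
      rw [Finset.sum_Icc_succ_top (Nat.le_add_left 1 n), ih]
      simp

/-- abstract Crank–Nicolson stability estimate. Let `ρ^0 = 0` in a real
inner product space, with `(ρ^m - ρ^(m-1))/τ + A^m = R^m` for `1 ≤ m ≤ M`, and suppose
`∑_{m=1}^{m₀} ⟪A^m, ρ^(m-1/2)⟫ ≥ 0` for all `m₀`, where `ρ^(m-1/2) = (ρ^m + ρ^(m-1))/2`.
Then `‖ρ^(m₀)‖ ≤ 2τ ∑_{m=1}^{m₀} ‖R^m‖` for all `1 ≤ m₀ ≤ M`. -/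
theorem CN_abstract_stability {E : Type*} [NormedAddCommGroup E] [InnerProductSpace ℝ E]
    (M : ℕ) (hM : 0 < M) (τ : ℝ) (hτ : 0 < τ)
    (ρ A R : ℕ → E) (hρ0 : ρ 0 = 0)
    (heq : ∀ m, 1 ≤ m → m ≤ M → (1 / τ) • (ρ m - ρ (m - 1)) + A m = R m)
    (hpos : ∀ m₀, 1 ≤ m₀ → m₀ ≤ M →
      0 ≤ ∑ m ∈ Finset.Icc 1 m₀, ⟪A m, (2⁻¹ : ℝ) • (ρ m + ρ (m - 1))⟫) :
    ∀ m₀, 1 ≤ m₀ → m₀ ≤ M →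
      ‖ρ m₀‖ ≤ 2 * τ * ∑ m ∈ Finset.Icc 1 m₀, ‖R m‖ := by
  intro m₀ hm₀1 hm₀M
  -- choose m* maximizing ‖ρ m‖ over Icc 0 m₀
  obtain ⟨k, hk, hkmax⟩ := Finset.exists_max_image (Finset.Icc 0 m₀) (fun m => ‖ρ m‖)
    ⟨0, by simp⟩
  simp only [Finset.mem_Icc] at hk
  have hkm₀ : k ≤ m₀ := hk.2
  have hRnn : (0:ℝ) ≤ ∑ m ∈ Finset.Icc 1 m₀, ‖R m‖ :=
    Finset.sum_nonneg fun m _ => norm_nonneg _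
  have hmono : ∀ j, j ≤ m₀ → ‖ρ j‖ ≤ ‖ρ k‖ := fun j hj =>
    hkmax j (by simp [hj])
  rcases Nat.eq_zero_or_pos k with hk0 | hk1
  · -- then ρ m₀ has norm ≤ ‖ρ 0‖ = 0
    have h := hmono m₀ le_rfl
    rw [hk0, hρ0, norm_zero] at h
    have h0 : ‖ρ m₀‖ = 0 := le_antisymm h (norm_nonneg _)
    rw [h0]
    positivity
  -- main case: 1 ≤ k
  have hkM : k ≤ M := le_trans hkm₀ hm₀M
  set N := ‖ρ k‖ with hN
  have hNnn : 0 ≤ N := norm_nonneg _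
  -- key identity on each step
  have key : ∀ m, 1 ≤ m → m ≤ M →
      ⟪R m, (2⁻¹ : ℝ) • (ρ m + ρ (m-1))⟫ =
        (1 / (2*τ)) * (‖ρ m‖^2 - ‖ρ (m-1)‖^2) + ⟪A m, (2⁻¹ : ℝ) • (ρ m + ρ (m-1))⟫ := by
    intro m h1 h2
    rw [← heq m h1 h2, inner_add_left]
    congr 1
    rw [real_inner_smul_left, real_inner_smul_right, inner_sub_left, inner_add_right,
      inner_add_right, real_inner_comm (ρ (m-1)) (ρ m), real_inner_self_eq_norm_sq,
      real_inner_self_eq_norm_sq]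
    field_simp
    ring
  -- sum over Icc 1 k
  have hsum : ∑ m ∈ Finset.Icc 1 k, ⟪R m, (2⁻¹ : ℝ) • (ρ m + ρ (m-1))⟫ =
      (1 / (2*τ)) * N^2 + ∑ m ∈ Finset.Icc 1 k, ⟪A m, (2⁻¹ : ℝ) • (ρ m + ρ (m-1))⟫ := by
    have : ∀ m ∈ Finset.Icc 1 k, ⟪R m, (2⁻¹ : ℝ) • (ρ m + ρ (m-1))⟫ =
        (1 / (2*τ)) * (‖ρ m‖^2 - ‖ρ (m-1)‖^2) + ⟪A m, (2⁻¹ : ℝ) • (ρ m + ρ (m-1))⟫ := by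
      intro m hm
      simp only [Finset.mem_Icc] at hm
      exact key m hm.1 (le_trans hm.2 hkM)
    rw [Finset.sum_congr rfl this, Finset.sum_add_distrib, ← Finset.mul_sum,
      telescope_Icc (fun m => ‖ρ m‖^2) k, hρ0]
    simp [hN]
  -- bound each inner product term
  have hbound : ∀ m ∈ Finset.Icc 1 k, ⟪R m, (2⁻¹ : ℝ) • (ρ m + ρ (m-1))⟫ ≤ ‖R m‖ * N := by
    intro m hm
    simp only [Finset.mem_Icc] at hm
    have h1 : ‖(2⁻¹ : ℝ) • (ρ m + ρ (m-1))‖ ≤ N := by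
      rw [norm_smul]
      have := norm_add_le (ρ m) (ρ (m-1))
      have hm1 : ‖ρ m‖ ≤ N := hmono m (le_trans hm.2 hkm₀)
      have hm2 : ‖ρ (m-1)‖ ≤ N := hmono (m-1) (le_trans (Nat.sub_le m 1) (le_trans hm.2 hkm₀))
      simp only [norm_inv, Real.norm_ofNat]
      nlinarith
    calc ⟪R m, (2⁻¹ : ℝ) • (ρ m + ρ (m-1))⟫ ≤ ‖R m‖ * ‖(2⁻¹ : ℝ) • (ρ m + ρ (m-1))‖ :=
          real_inner_le_norm _ _
      _ ≤ ‖R m‖ * N := by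
          exact mul_le_mul_of_nonneg_left h1 (norm_nonneg _)
  have hS : (1 / (2*τ)) * N^2 ≤ (∑ m ∈ Finset.Icc 1 k, ‖R m‖) * N := by
    have h2 := hpos k hk1 hkM
    have h3 : ∑ m ∈ Finset.Icc 1 k, ⟪R m, (2⁻¹ : ℝ) • (ρ m + ρ (m-1))⟫ ≤
        ∑ m ∈ Finset.Icc 1 k, ‖R m‖ * N := Finset.sum_le_sum hbound
    rw [hsum] at h3
    rw [← Finset.sum_mul] at h3
    linarith
  have hNle : N ≤ 2 * τ * ∑ m ∈ Finset.Icc 1 k, ‖R m‖ := by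
    rcases eq_or_lt_of_le hNnn with h0 | h0
    · rw [← h0]
      have : (0:ℝ) ≤ ∑ m ∈ Finset.Icc 1 k, ‖R m‖ :=
        Finset.sum_nonneg fun m _ => norm_nonneg _
      positivity
    · have hτ2 : 0 < 2 * τ := by linarith
      rw [div_mul_eq_mul_div, one_mul, div_le_iff₀ hτ2] at hS
      nlinarith [hS, h0]
  have hsub : ∑ m ∈ Finset.Icc 1 k, ‖R m‖ ≤ ∑ m ∈ Finset.Icc 1 m₀, ‖R m‖ :=
    Finset.sum_le_sum_of_subset_of_nonneg (Finset.Icc_subset_Icc_right hkm₀)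
      (fun m _ _ => norm_nonneg _)
  calc ‖ρ m₀‖ ≤ N := hmono m₀ le_rfl
    _ ≤ 2 * τ * ∑ m ∈ Finset.Icc 1 k, ‖R m‖ := hNle
    _ ≤ 2 * τ * ∑ m ∈ Finset.Icc 1 m₀, ‖R m‖ := by
        apply mul_le_mul_of_nonneg_left hsub (by linarith)
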